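/- The group of affine jointly even-signed permutations is generated by the affine doubly even-signed permutations together with the single loop ℓ_1. -/

import Mathlib

def IsAffineSigned (n : ℤ) (π : Equiv.Perm ℤ) : Prop :=
  (∀ i : ℤ, π (i + 2 * n) = π i + 2 * n) ∧ (∀ i : ℤ, π (-i) = -π i)

def negSet (π : Equiv.Perm ℤ) : Set ℤ := {i : ℤ | 0 < i ∧ π i < 0}

def bigSet (n : ℤ) (π : Equiv.Perm ℤ) : Set ℤ := {i : ℤ | i < n ∧ n < π i}

def IsDoublyEvenSigned (n : ℤ) (π : Equiv.Perm ℤ) : Prop :=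
  IsAffineSigned n π ∧ (negSet π).Finite ∧ (bigSet n π).Finite ∧
    Even (negSet π).ncard ∧ Even (bigSet n π).ncard

/-- An affine jointly even-signed permutation: `#neg(π) + #big(π)` is even. -/
def IsJointlyEvenSigned (n : ℤ) (π : Equiv.Perm ℤ) : Prop :=
  IsAffineSigned n π ∧ (negSet π).Finite ∧ (bigSet n π).Finite ∧
    Even ((negSet π).ncard + (bigSet n π).ncard)

def loopFun (n a i : ℤ) : ℤ :=
  if (2 * n) ∣ (i - a) then i + 2 * n
  else if (2 * n) ∣ (i + a) then i - 2 * n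
  else i

/-! If `#neg π` is even then so is `#big π`, and `π` is doubly even-signed. Otherwise take
`σ = π ℓ₁⁻¹`. Via `ℓ₁⁻¹`, `negSet σ` is in bijection with `{j | 0 < ℓ₁ j} ∩ {j | π j < 0}`, and
`{j | 0 < ℓ₁ j}` is `{j | 0 < j}` with `2n - 1` traded for `1 - 2n`. Since
`π (2n - 1) = 2n - π 1` and `π (1 - 2n) = π 1 - 2n` with `π 1 ≠ 2n = π (2n)`, exactly one of the
two is sent below `0`, so `#neg σ` and `#neg π` differ by one. Likewise `{j | ℓ₁ j < n}` is
`{j | j < n}` with `1` traded for `2n - 1`, and `π 1 ≠ n = π n` makes `#big σ` and `#big π`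
differ by one. So `σ` is doubly even-signed and `π = σ ℓ₁`. -/

lemma eq_zero_or_le_or_le_neg_of_dvd {m a : ℤ} (h : m ∣ a) : a = 0 ∨ m ≤ a ∨ a ≤ -m := by
  by_contra! H
  exact H.1 (Int.eq_zero_of_abs_lt_dvd h (abs_lt.2 ⟨by omega, by omega⟩))

lemma ncard_inter_insert_sdiff {α : Type*} {P N : Set α} {a b : α} (ha : a ∈ P) (hb : b ∉ P)
    (hab : a ∈ N ↔ b ∉ N) (h : (P ∩ N).Finite) :
    (insert b (P \ {a}) ∩ N).Finite ∧ Odd ((insert b (P \ {a}) ∩ N).ncard + (P ∩ N).ncard) := by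
  by_cases haN : a ∈ N
  · have hS : insert b (P \ {a}) ∩ N = (P ∩ N) \ {a} := by
      ext x
      simp only [Set.mem_inter_iff, Set.mem_insert_iff, Set.mem_sdiff, Set.mem_singleton_iff]
      constructor
      · rintro ⟨rfl | hx, hxN⟩
        · exact absurd hxN (hab.1 haN)
        · exact ⟨⟨hx.1, hxN⟩, hx.2⟩
      · rintro ⟨⟨hxP, hxN⟩, hxa⟩
        exact ⟨Or.inr ⟨hxP, hxa⟩, hxN⟩
    rw [hS]
    have := Set.ncard_sdiff_singleton_add_one (Set.mem_inter ha haN) h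
    exact ⟨h.sdiff, Nat.odd_iff.2 (by omega)⟩
  · have hS : insert b (P \ {a}) ∩ N = insert b (P ∩ N) := by
      ext x
      simp only [Set.mem_inter_iff, Set.mem_insert_iff, Set.mem_sdiff, Set.mem_singleton_iff]
      constructor
      · rintro ⟨rfl | hx, hxN⟩
        · exact Or.inl rfl
        · exact Or.inr ⟨hx.1, hxN⟩
      · rintro (rfl | ⟨hxP, hxN⟩)
        · exact ⟨Or.inl rfl, not_not.1 (mt hab.2 haN)⟩
        · exact ⟨Or.inr ⟨hxP, fun hxa => haN (hxa ▸ hxN)⟩, hxN⟩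
    rw [hS, Set.ncard_insert_of_notMem (fun hbP => hb hbP.1) h]
    exact ⟨h.insert b, Nat.odd_iff.2 (by omega)⟩

lemma ncard_inter_preimage_symm {α : Type*} {e : Equiv.Perm α} {P N : Set α} {a b : α}
    (he : e ⁻¹' P = insert b (P \ {a})) (ha : a ∈ P) (hb : b ∉ P) (hab : a ∈ N ↔ b ∉ N)
    (h : (P ∩ N).Finite) :
    (P ∩ e.symm ⁻¹' N).Finite ∧ Odd ((P ∩ e.symm ⁻¹' N).ncard + (P ∩ N).ncard) := by
  rw [← Equiv.image_eq_preimage_symm, ← Set.image_preimage_inter,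
    Set.ncard_image_of_injective _ e.injective, he]
  obtain ⟨hfin, hodd⟩ := ncard_inter_insert_sdiff ha hb hab h
  exact ⟨hfin.image e, hodd⟩

namespace IsAffineSigned

variable {n : ℤ} {π σ : Equiv.Perm ℤ}

lemma mul (hπ : IsAffineSigned n π) (hσ : IsAffineSigned n σ) : IsAffineSigned n (π * σ) :=
  ⟨fun i => by simp only [Equiv.Perm.mul_apply, hσ.1, hπ.1],
    fun i => by simp only [Equiv.Perm.mul_apply, hσ.2, hπ.2]⟩

lemma inv (hπ : IsAffineSigned n π) : IsAffineSigned n π⁻¹ :=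
  ⟨fun i => π.injective (by simp only [hπ.1, Equiv.Perm.coe_inv, Equiv.apply_symm_apply]),
    fun i => π.injective (by simp only [hπ.2, Equiv.Perm.coe_inv, Equiv.apply_symm_apply])⟩

lemma map_self (hπ : IsAffineSigned n π) : π n = n := by
  have := hπ.1 (-n)
  rw [hπ.2, neg_add_eq_sub, two_mul, add_sub_cancel_right] at this
  omega

lemma map_two_mul (hπ : IsAffineSigned n π) : π (2 * n) = 2 * n := by
  have h₀ : π 0 = 0 := by have := hπ.2 0; rw [neg_zero] at this; omega
  simpa [h₀] using hπ.1 0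

lemma map_two_mul_sub_one (hπ : IsAffineSigned n π) : π (2 * n - 1) = 2 * n - π 1 := by
  have := hπ.1 (-1)
  rw [hπ.2, neg_add_eq_sub] at this
  omega

lemma map_one_sub_two_mul (hπ : IsAffineSigned n π) : π (1 - 2 * n) = π 1 - 2 * n := by
  have := hπ.1 (1 - 2 * n)
  rw [sub_add_cancel] at this
  omega

end IsAffineSigned

section Loop

variable {n : ℤ} {ℓ π : Equiv.Perm ℤ}

lemma loopFun_add_two_mul (a i : ℤ) : loopFun n a (i + 2 * n) = loopFun n a i + 2 * n := by
  have h₁ : 2 * n ∣ i + 2 * n - a ↔ 2 * n ∣ i - a := by rw [add_sub_right_comm, dvd_add_self_right]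
  have h₂ : 2 * n ∣ i + 2 * n + a ↔ 2 * n ∣ i + a := by rw [add_right_comm, dvd_add_self_right]
  simp only [loopFun, h₁, h₂]
  split_ifs <;> ring

lemma loopFun_neg (hn : 2 ≤ n) (i : ℤ) : loopFun n 1 (-i) = -loopFun n 1 i := by
  have h₁ : 2 * n ∣ -i - 1 ↔ 2 * n ∣ i + 1 := by rw [← dvd_neg, neg_sub, sub_neg_eq_add, add_comm]
  have h₂ : 2 * n ∣ -i + 1 ↔ 2 * n ∣ i - 1 := by rw [← dvd_neg, neg_add, neg_neg, ← sub_eq_add_neg]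
  have hboth : 2 * n ∣ i - 1 → ¬ 2 * n ∣ i + 1 := fun h h' => by
    have := eq_zero_or_le_or_le_neg_of_dvd (dvd_sub h' h)
    omega
  simp only [loopFun, h₁, h₂]
  split_ifs with hp hm hm <;> (try exact absurd hp (hboth hm)) <;> ring

lemma loopFun_preimage_Ioi (hn : 2 ≤ n) :
    loopFun n 1 ⁻¹' Set.Ioi 0 = insert (1 - 2 * n) (Set.Ioi 0 \ {2 * n - 1}) := by
  ext i
  simp only [Set.mem_preimage, Set.mem_Ioi, Set.mem_insert_iff, Set.mem_sdiff,
    Set.mem_singleton_iff, loopFun]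
  split_ifs with h₁ h₂
  · have := eq_zero_or_le_or_le_neg_of_dvd h₁
    have := eq_zero_or_le_or_le_neg_of_dvd (dvd_sub_self_right.2 h₁)
    omega
  · have := eq_zero_or_le_or_le_neg_of_dvd h₂
    have := eq_zero_or_le_or_le_neg_of_dvd (dvd_sub_self_right.2 h₂)
    have := eq_zero_or_le_or_le_neg_of_dvd (dvd_add_self_right.2 h₂)
    omega
  · have : i - 1 ≠ -(2 * n) := fun h => h₁ (h ▸ (dvd_neg.2 dvd_rfl))
    have : i + 1 ≠ 2 * n := fun h => h₂ (h ▸ dvd_rfl)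
    omega

lemma loopFun_preimage_Iio (hn : 2 ≤ n) :
    loopFun n 1 ⁻¹' Set.Iio n = insert (2 * n - 1) (Set.Iio n \ {1}) := by
  ext i
  simp only [Set.mem_preimage, Set.mem_Iio, Set.mem_insert_iff, Set.mem_sdiff,
    Set.mem_singleton_iff, loopFun]
  split_ifs with h₁ h₂
  · have := eq_zero_or_le_or_le_neg_of_dvd h₁
    have := eq_zero_or_le_or_le_neg_of_dvd (dvd_sub_self_right.2 h₁)
    omega
  · have := eq_zero_or_le_or_le_neg_of_dvd h₂
    have := eq_zero_or_le_or_le_neg_of_dvd (dvd_sub_self_right.2 h₂)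
    have := eq_zero_or_le_or_le_neg_of_dvd (dvd_add_self_right.2 h₂)
    omega
  · have : i - 1 ≠ 0 := fun h => h₁ (h ▸ dvd_zero _)
    have : i + 1 ≠ 2 * n := fun h => h₂ (h ▸ dvd_rfl)
    omega

lemma isAffineSigned_of_loopFun (hn : 2 ≤ n) (hℓ : ⇑ℓ = loopFun n 1) : IsAffineSigned n ℓ :=
  ⟨fun i => by simp only [hℓ, loopFun_add_two_mul], fun i => by simp only [hℓ, loopFun_neg hn]⟩

lemma negSet_mul_inv_loop (hn : 2 ≤ n) (hℓ : ⇑ℓ = loopFun n 1) (hπ : IsAffineSigned n π)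
    (h : (negSet π).Finite) :
    (negSet (π * ℓ⁻¹)).Finite ∧ Odd ((negSet (π * ℓ⁻¹)).ncard + (negSet π).ncard) := by
  have hπ1 : π 1 ≠ 2 * n := fun h => by
    have := π.injective (h.trans hπ.map_two_mul.symm)
    omega
  refine ncard_inter_preimage_symm (e := ℓ) (N := {j | π j < 0}) (hℓ ▸ loopFun_preimage_Ioi hn)
    (Set.mem_Ioi.2 (by omega)) (Set.notMem_Ioi.2 (by omega)) ?_ h
  simp only [Set.mem_ofPred_eq, hπ.map_two_mul_sub_one, hπ.map_one_sub_two_mul]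
  omega

lemma bigSet_mul_inv_loop (hn : 2 ≤ n) (hℓ : ⇑ℓ = loopFun n 1) (hπ : IsAffineSigned n π)
    (h : (bigSet n π).Finite) :
    (bigSet n (π * ℓ⁻¹)).Finite ∧ Odd ((bigSet n (π * ℓ⁻¹)).ncard + (bigSet n π).ncard) := by
  have hπ1 : π 1 ≠ n := fun h => by
    have := π.injective (h.trans hπ.map_self.symm)
    omega
  refine ncard_inter_preimage_symm (e := ℓ) (N := {j | n < π j}) (hℓ ▸ loopFun_preimage_Iio hn)
    (Set.mem_Iio.2 (by omega)) (Set.notMem_Iio.2 (by omega)) ?_ h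
  simp only [Set.mem_ofPred_eq, hπ.map_two_mul_sub_one]
  omega

end Loop

/-- The group of affine jointly even-signed permutations is generated by the affine
doubly even-signed permutations together with the single loop `ℓ₁`. -/
theorem jointlyEvenSigned_generated (n : ℤ) (hn : 2 ≤ n)
    (ℓ₁ : Equiv.Perm ℤ) (hℓ : ∀ i, ℓ₁ i = loopFun n 1 i)
    (π : Equiv.Perm ℤ) (hπ : IsJointlyEvenSigned n π) :
    π ∈ Subgroup.closure ({σ : Equiv.Perm ℤ | IsDoublyEvenSigned n σ} ∪ {ℓ₁}) := by
  obtain ⟨hπ, hnegFin, hbigFin, hsum⟩ := hπ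
  have hparity := Nat.even_add.1 hsum
  by_cases hneg : Even (negSet π).ncard
  · exact Subgroup.subset_closure (Or.inl ⟨hπ, hnegFin, hbigFin, hneg, hparity.1 hneg⟩)
  have hℓ' : ⇑ℓ₁ = loopFun n 1 := funext hℓ
  obtain ⟨hnegFin', hnegOdd⟩ := negSet_mul_inv_loop hn hℓ' hπ hnegFin
  obtain ⟨hbigFin', hbigOdd⟩ := bigSet_mul_inv_loop hn hℓ' hπ hbigFin
  have hσ : IsDoublyEvenSigned n (π * ℓ₁⁻¹) :=
    ⟨hπ.mul (isAffineSigned_of_loopFun hn hℓ').inv, hnegFin', hbigFin',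
      Nat.not_odd_iff_even.1 (mt (Nat.odd_add.1 hnegOdd).1 hneg),
      Nat.not_odd_iff_even.1 (mt (Nat.odd_add.1 hbigOdd).1 (mt hparity.2 hneg))⟩
  rw [← inv_mul_cancel_right π ℓ₁]
  exact Subgroup.mul_mem _ (Subgroup.subset_closure (Or.inl hσ))
    (Subgroup.subset_closure (Or.inr rfl))
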